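/- arXiv:0901.0869 — 2 statements merged into one kernel-verified Lean document; each statement's English description precedes it below -/
import Mathlib

section
/- Let ℛ be a linear growing TRS over 𝓕, let 𝓖 = 𝓕 ∪ {•}, T = NF_{ℛ•}, and let 𝒟(ℛ) be the powerset-pair automaton built from 𝒞'_T(ℛ). For every s ∈ 𝒯(𝓕): if s →_{Γ_𝒟}* [S,P] then S = s↓, the set of all states of 𝒞'_T(ℛ) reachable from s. -/
set_option maxHeartbeats 1000000

/-! ## Terms over a signature -/

/-- Terms over a signature given by a type `F` of function symbols together with
an arity function `ar`; variables are natural numbers. -/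
inductive Term (F : Type) (ar : F → ℕ) : Type
  | var : ℕ → Term F ar
  | app : (f : F) → (Fin (ar f) → Term F ar) → Term F ar

namespace Term

variable {F : Type} {ar : F → ℕ}

/-- The (finite) set of variables of a term. -/
def vars : Term F ar → Finset ℕ
  | var n => {n}
  | app _ ts => Finset.univ.biUnion fun i => (ts i).vars

/-- A term is ground if it contains no variables. -/
def Ground (t : Term F ar) : Prop := t.vars = ∅

/-- The number of occurrences of the variable `n` in a term. -/
def count (n : ℕ) : Term F ar → ℕ
  | var m => if m = n then 1 else 0
  | app _ ts => ∑ i, (ts i).count n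

/-- A term is linear if no variable occurs twice in it. -/
def Linear (t : Term F ar) : Prop := ∀ n, t.count n ≤ 1

/-- Applying a substitution to a term. -/
def subst (σ : ℕ → Term F ar) : Term F ar → Term F ar
  | var n => σ n
  | app f ts => app f fun i => (ts i).subst σ

/-- The subterm at a position (a list of argument indices), if the position is valid. -/
def subtermAt : Term F ar → List ℕ → Option (Term F ar)
  | t, [] => some t
  | var _, _ :: _ => none
  | app f ts, i :: p => if h : i < ar f then (ts ⟨i, h⟩).subtermAt p else none

/-- Replacing the subterm at a position, if the position is valid. -/
def replaceAt : Term F ar → List ℕ → Term F ar → Option (Term F ar)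
  | _, [], u => some u
  | var _, _ :: _, _ => none
  | app f ts, i :: p, u =>
      if h : i < ar f then
        ((ts ⟨i, h⟩).replaceAt p u).map fun s => app f (Function.update ts ⟨i, h⟩ s)
      else none

/-- `s.IsSubtermOf t` : `s` is a subterm of `t`. -/
def IsSubtermOf (s t : Term F ar) : Prop := ∃ p, t.subtermAt p = some s

/-- Relabelling of function symbols along an arity-preserving map of signatures. -/
def relabel {G : Type} {arG : G → ℕ} (φ : F → G) (h : ∀ f, arG (φ f) = ar f) :
    Term F ar → Term G arG
  | var n => var n
  | app f ts => app (φ f) fun i => (ts (Fin.cast (h f) i)).relabel φ h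

end Term

/-! ## Rewriting -/

/-- One-step rewriting with a set of rewrite rules: there are a position `p` of `s`,
a rule `(l, r)` and a substitution `σ` with `s|_p = lσ` and `t = s[rσ]_p`. -/
def Rewrites {F : Type} {ar : F → ℕ} (R : Set (Term F ar × Term F ar))
    (s t : Term F ar) : Prop :=
  ∃ (p : List ℕ) (l r : Term F ar) (σ : ℕ → Term F ar),
    (l, r) ∈ R ∧ s.subtermAt p = some (l.subst σ) ∧ s.replaceAt p (r.subst σ) = some t

/-- Many-step rewriting (reflexive–transitive closure). -/
abbrev RewritesStar {F : Type} {ar : F → ℕ} (R : Set (Term F ar × Term F ar)) :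
    Term F ar → Term F ar → Prop :=
  Relation.ReflTransGen (Rewrites R)

/-- A term rewriting system: a finite set of rules whose left-hand sides are not variables. -/
structure TRS (F : Type) (ar : F → ℕ) where
  rules : Set (Term F ar × Term F ar)
  finite : rules.Finite
  lhs_not_var : ∀ lr ∈ rules, ∀ n, lr.1 ≠ Term.var n

namespace TRS

variable {F : Type} {ar : F → ℕ}

def LeftLinear (R : TRS F ar) : Prop := ∀ lr ∈ R.rules, lr.1.Linear

def RightLinear (R : TRS F ar) : Prop := ∀ lr ∈ R.rules, lr.2.Linear

/-- A TRS is linear if all left- and right-hand sides are linear terms. -/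
def IsLinear (R : TRS F ar) : Prop := R.LeftLinear ∧ R.RightLinear

/-- A TRS is growing if every variable occurring both in the left- and the right-hand
side of a rule occurs at depth 1 in the left-hand side. -/
def Growing (R : TRS F ar) : Prop :=
  ∀ lr ∈ R.rules, ∀ n ∈ lr.1.vars, n ∈ lr.2.vars →
    ∀ (f : F) (ts : Fin (ar f) → Term F ar), lr.1 = Term.app f ts →
      ∀ i, n ∈ (ts i).vars → ts i = Term.var n

/-- A redex is an instance of a left-hand side. -/
def IsRedex (R : TRS F ar) (s : Term F ar) : Prop :=
  ∃ lr ∈ R.rules, ∃ σ : ℕ → Term F ar, s = lr.1.subst σ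

/-- `p` is a redex position of `s`. -/
def RedexPos (R : TRS F ar) (s : Term F ar) (p : List ℕ) : Prop :=
  ∃ u, s.subtermAt p = some u ∧ R.IsRedex u

def Reducible (R : TRS F ar) (s : Term F ar) : Prop := ∃ p, R.RedexPos s p

/-- A term is root-stable if it cannot be rewritten to a redex. -/
def RootStable (R : TRS F ar) (s : Term F ar) : Prop :=
  ¬ ∃ t, RewritesStar R.rules s t ∧ R.IsRedex t

/-- Ground normal forms. -/
def NFset (R : TRS F ar) : Set (Term F ar) := { t | t.Ground ∧ ¬ R.Reducible t }

/-- Ground redexes. -/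
def RedexSet (R : TRS F ar) : Set (Term F ar) := { t | t.Ground ∧ R.IsRedex t }

/-- Root-stable ground terms. -/
def RSset (R : TRS F ar) : Set (Term F ar) := { t | t.Ground ∧ R.RootStable t }

/-- Relabelling a TRS along an arity-preserving map of signatures. -/
def relabel {G : Type} {arG : G → ℕ} (R : TRS F ar) (φ : F → G)
    (h : ∀ f, arG (φ f) = ar f) : TRS G arG where
  rules := (fun lr => (lr.1.relabel φ h, lr.2.relabel φ h)) '' R.rules
  finite := R.finite.image _
  lhs_not_var := by
    rintro lr ⟨lr0, h0, rfl⟩ n hn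
    dsimp only at hn
    cases h1 : lr0.1 with
    | var m => exact absurd h1 (R.lhs_not_var lr0 h0 m)
    | app f ts =>
        rw [h1] at hn
        simp only [Term.relabel] at hn
        cases hn

end TRS

/-! ## Tree automata -/

/-- A transition rule `f(q₁,…,qₙ) → q` of a bottom-up tree automaton. -/
abbrev TARule (F : Type) (ar : F → ℕ) (Q : Type) : Type :=
  (f : F) × ((Fin (ar f) → Q) × Q)

/-- A (finite bottom-up) tree automaton without ε-transitions. -/
structure TreeAutomaton (F : Type) (ar : F → ℕ) (Q : Type) where
  trans : Set (TARule F ar Q)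
  final : Set Q

/-- `Reaches Δ t q` : the ground term `t` rewrites to the state `q` using the
transition rules `Δ`. -/
inductive Reaches {F : Type} {ar : F → ℕ} {Q : Type} (Δ : Set (TARule F ar Q)) :
    Term F ar → Q → Prop
  | app {f : F} {ts : Fin (ar f) → Term F ar} {qs : Fin (ar f) → Q} {q : Q} :
      (∀ i, Reaches Δ (ts i) (qs i)) → (⟨f, qs, q⟩ : TARule F ar Q) ∈ Δ →
      Reaches Δ (Term.app f ts) q

/-- `ReachesT Δ θ t q` : the term `t`, whose variables are interpreted as the states
given by `θ`, rewrites to the state `q` using the transition rules `Δ`. -/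
inductive ReachesT {F : Type} {ar : F → ℕ} {Q : Type} (Δ : Set (TARule F ar Q))
    (θ : ℕ → Q) : Term F ar → Q → Prop
  | var (n : ℕ) : ReachesT Δ θ (Term.var n) (θ n)
  | app {f : F} {ts : Fin (ar f) → Term F ar} {qs : Fin (ar f) → Q} {q : Q} :
      (∀ i, ReachesT Δ θ (ts i) (qs i)) → (⟨f, qs, q⟩ : TARule F ar Q) ∈ Δ →
      ReachesT Δ θ (Term.app f ts) q

/-- The language of a tree automaton: all ground terms reaching a final state. -/
def Lang {F : Type} {ar : F → ℕ} {Q : Type} (A : TreeAutomaton F ar Q) :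
    Set (Term F ar) :=
  { t | t.Ground ∧ ∃ q ∈ A.final, Reaches A.trans t q }

/-- A set of ground terms is recognizable if it is the language of some finite
tree automaton. -/
def Recognizable {F : Type} {ar : F → ℕ} (T : Set (Term F ar)) : Prop :=
  ∃ (Q : Type) (_ : Fintype Q) (A : TreeAutomaton F ar Q), T = Lang A

/-- The set of states occurring in a set of transition rules. -/
def statesOf {F : Type} {ar : F → ℕ} {Q : Type} (Γ : Set (TARule F ar Q)) : Set Q :=
  { q | ∃ ρ ∈ Γ, ρ.2.2 = q ∨ ∃ i, ρ.2.1 i = q }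

/-! ## The automaton `ℬ(ℛ)` -/

/-- The canonical representative of the state `⟨t⟩` of `ℬ(ℛ)`: all variables are
identified with the single state `⟨x⟩`, represented by `var 0`. -/
def stPattern {F : Type} {ar : F → ℕ} : Term F ar → Term F ar
  | Term.var _ => Term.var 0
  | Term.app f ts => Term.app f ts

/-- `S_ℛ`: the set of all subterms of arguments of left-hand sides of `ℛ`. -/
def SR {F : Type} {ar : F → ℕ} (R : TRS F ar) : Set (Term F ar) :=
  { s | ∃ lr ∈ R.rules, ∃ (f : F) (ts : Fin (ar f) → Term F ar),
        lr.1 = Term.app f ts ∧ ∃ i, s.IsSubtermOf (ts i) }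

/-- The representatives of the states of `ℬ(ℛ)`: the patterns of terms of `S_ℛ`,
together with `⟨x⟩`. -/
def BStateSet {F : Type} {ar : F → ℕ} (R : TRS F ar) : Set (Term F ar) :=
  stPattern '' SR R ∪ {Term.var 0}

/-- The matching rules of `ℬ(ℛ)` (with states encoded by `enc`):
`f(⟨t₁⟩,…,⟨tₙ⟩) → ⟨t⟩` for every `t = f(t₁,…,tₙ) ∈ S_ℛ`. -/
def BMatch {F : Type} {ar : F → ℕ} {Q : Type} (R : TRS F ar) (enc : Term F ar → Q) :
    Set (TARule F ar Q) :=
  { ρ | ∃ (f : F) (ts : Fin (ar f) → Term F ar), Term.app f ts ∈ SR R ∧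
        ρ = ⟨f, fun i => enc (stPattern (ts i)), enc (Term.app f ts)⟩ }

/-- The propagation rules `f(⟨x⟩,…,⟨x⟩) → ⟨x⟩` for every function symbol `f`. -/
def BProp {F : Type} {ar : F → ℕ} {Q : Type} (enc : Term F ar → Q) :
    Set (TARule F ar Q) :=
  { ρ | ∃ f : F, ρ = ⟨f, fun _ => enc (Term.var 0), enc (Term.var 0)⟩ }

/-- The transition rules of the automaton `ℬ(ℛ)`. -/
def BTrans {F : Type} {ar : F → ℕ} {Q : Type} (R : TRS F ar) (enc : Term F ar → Q) :
    Set (TARule F ar Q) :=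
  BMatch R enc ∪ BProp enc

/-- `Σ(t)`: the set of ground instances of the term `t`. -/
def GInst {F : Type} {ar : F → ℕ} (t : Term F ar) : Set (Term F ar) :=
  { s | s.Ground ∧ ∃ σ, s = t.subst σ }

/-! ## Saturation -/

/-- The state `qᵢ` associated to the argument `lᵢ` of a left-hand side in the
saturation rule: `lᵢθ` if `lᵢ` is a variable occurring in `r` (whose variable set
is `rv`), and `⟨lᵢ⟩` otherwise. -/
def satArg {F : Type} {ar : F → ℕ} {Q : Type} (enc : Term F ar → Q) (θ : ℕ → Q)
    (rv : Finset ℕ) : Term F ar → Q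
  | Term.var n => if n ∈ rv then θ n else enc (Term.var 0)
  | Term.app f ts => enc (Term.app f ts)

/-- One step of the saturation process: add all transition rules `f(q₁,…,qₙ) → q`
obtained from a rewrite rule `f(l₁,…,lₙ) → r` and a state substitution `θ`
(with values among the states `Qc` of the automaton) such that `rθ →_Γ* q`. -/
def satStep {F : Type} {ar : F → ℕ} {Q : Type} (R : TRS F ar) (enc : Term F ar → Q)
    (Qc : Set Q) (Γ : Set (TARule F ar Q)) : Set (TARule F ar Q) :=
  Γ ∪ { ρ | ∃ (f : F) (ls : Fin (ar f) → Term F ar) (r : Term F ar) (θ : ℕ → Q) (q : Q),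
        (Term.app f ls, r) ∈ R.rules ∧ (∀ n ∈ r.vars, θ n ∈ Qc) ∧ ReachesT Γ θ r q ∧
        ρ = ⟨f, fun i => satArg enc θ r.vars (ls i), q⟩ }

/-- The saturated set of transition rules: the closure of `Γ0` under the saturation
inference rule. -/
def satGamma {F : Type} {ar : F → ℕ} {Q : Type} (R : TRS F ar) (enc : Term F ar → Q)
    (Qc : Set Q) (Γ0 : Set (TARule F ar Q)) : Set (TARule F ar Q) :=
  ⋃ n, (satStep R enc Qc)^[n] Γ0

/-! ## The automaton `𝒞_T(ℛ)` and its extension `𝒞'_T(ℛ)` -/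

/-- The data of the construction of the automaton `𝒞_T(ℛ)`: an automaton `𝒜_T`
recognizing `T` with all states accessible and state set `QA`, together with an
encoding `enc` of the states `⟨t⟩` of `ℬ(ℛ)` into the common state type `Q`, such
that every state common to `𝒜_T` and `ℬ(ℛ)` accepts the same set of terms in both
automata. -/
structure CSetup {G : Type} [Fintype G] {arG : G → ℕ} (Q : Type) [Fintype Q]
    (Rg : TRS G arG) (T : Set (Term G arG)) where
  enc : Term G arG → Q
  A : TreeAutomaton G arG Q
  QA : Set Q
  henc : Set.InjOn enc (BStateSet Rg)
  hAstates : ∀ ρ ∈ A.trans, ρ.2.2 ∈ QA ∧ ∀ i, ρ.2.1 i ∈ QA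
  hfinal : A.final ⊆ QA
  hacc : ∀ q ∈ QA, ∃ s : Term G arG, s.Ground ∧ Reaches A.trans s q
  hground : ∃ s : Term G arG, s.Ground
  hshared : ∀ q ∈ QA ∩ enc '' BStateSet Rg, ∀ s : Term G arG,
      Reaches A.trans s q ↔ Reaches (BTrans Rg enc) s q
  hT : T = Lang A

namespace CSetup

variable {G : Type} [Fintype G] {arG : G → ℕ} {Q : Type} [Fintype Q]
  {Rg : TRS G arG} {T : Set (Term G arG)}

/-- The set of states of the automaton `𝒞_T(ℛ)`. -/
def Qstates (C : CSetup Q Rg T) : Set Q := C.QA ∪ C.enc '' BStateSet Rg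

/-- The transition rules of `𝒞_T(ℛ)` before saturation: the union of `𝒜_T` and `ℬ(ℛ)`. -/
def Γ0 (C : CSetup Q Rg T) : Set (TARule G arG Q) := C.A.trans ∪ BTrans Rg C.enc

/-- The transition rules of `𝒞_T(ℛ)` after saturation. -/
def Γsat (C : CSetup Q Rg T) : Set (TARule G arG Q) :=
  satGamma Rg C.enc C.Qstates C.Γ0

end CSetup

/-- The redex rules `f(⟪l₁⟫,…,⟪lₙ⟫) → q_r` for every left-hand side `f(l₁,…,lₙ)`. -/
def RedexRules {F : Type} {ar : F → ℕ} {Q : Type} (R : TRS F ar)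
    (enc2 : Term F ar → Q) (qr : Q) : Set (TARule F ar Q) :=
  { ρ | ∃ (f : F) (ls : Fin (ar f) → Term F ar) (r : Term F ar),
        (Term.app f ls, r) ∈ R.rules ∧
        ρ = ⟨f, fun i => enc2 (stPattern (ls i)), qr⟩ }

/-- The rules `f(⟨x⟩,…,q_r,…,⟨x⟩) → q_r`. -/
def QrProp {F : Type} {ar : F → ℕ} {Q : Type} (enc : Term F ar → Q) (qr : Q) :
    Set (TARule F ar Q) :=
  { ρ | ∃ (f : F) (j : Fin (ar f)),
        ρ = ⟨f, fun i => if i = j then qr else enc (Term.var 0), qr⟩ }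

/-- The data of the construction of the automaton `𝒞'_T(ℛ)`: `𝒞_T(ℛ)` extended with
a fresh copy `⟪t⟫` (encoded by `enc2`, with `⟪x⟫ = ⟨x⟩`) of the states of `ℬ(ℛ)` and
a fresh state `q_r`. -/
structure CpSetup {G : Type} [Fintype G] {arG : G → ℕ} (Q : Type) [Fintype Q]
    (Rg : TRS G arG) (T : Set (Term G arG)) extends CSetup Q Rg T where
  enc2 : Term G arG → Q
  qr : Q
  henc2 : Set.InjOn enc2 (BStateSet Rg)
  hx : enc2 (Term.var 0) = enc (Term.var 0)
  hfresh : (enc2 '' (BStateSet Rg \ {Term.var 0}) ∪ {qr}) ∩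
              (QA ∪ enc '' BStateSet Rg) = ∅
  hqr : qr ∉ enc2 '' (BStateSet Rg \ {Term.var 0})

namespace CpSetup

variable {G : Type} [Fintype G] {arG : G → ℕ} {Q : Type} [Fintype Q]
  {Rg : TRS G arG} {T : Set (Term G arG)}

/-- The transition rules `Γ'` of the automaton `𝒞'_T(ℛ)`. -/
def Γ' (C : CpSetup Q Rg T) : Set (TARule G arG Q) :=
  C.toCSetup.Γsat ∪ BMatch Rg C.enc2 ∪ RedexRules Rg C.enc2 C.qr ∪ QrProp C.enc C.qr

end CpSetup

/-! ## The signature `𝓖 = 𝓕 ∪ {•}` -/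

/-- The arity function of the extended signature `𝓕 ∪ {•}` (with `•` the fresh
constant `none`). -/
def arB {F : Type} (ar : F → ℕ) : Option F → ℕ
  | none => 0
  | some f => ar f

/-- The term `•`. -/
def bulletTm {F : Type} {ar : F → ℕ} : Term (Option F) (arB ar) :=
  Term.app none Fin.elim0

/-- The embedding of `𝒯(𝓕)`-terms into terms over `𝓕 ∪ {•}`. -/
def liftB {F : Type} {ar : F → ℕ} : Term F ar → Term (Option F) (arB ar) :=
  Term.relabel some (fun _ => rfl)

/-- A TRS over `𝓕` viewed as a TRS over `𝓕 ∪ {•}`. -/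
def TRS.liftB {F : Type} {ar : F → ℕ} (R : TRS F ar) : TRS (Option F) (arB ar) :=
  R.relabel some (fun _ => rfl)

/-- The TRS `ℛ• = ℛ ∪ {• → •}` over the signature `𝓕 ∪ {•}`. -/
def TRS.bullet {F : Type} {ar : F → ℕ} (R : TRS F ar) : TRS (Option F) (arB ar) where
  rules := R.liftB.rules ∪ {(bulletTm, bulletTm)}
  finite := R.liftB.finite.union (Set.finite_singleton _)
  lhs_not_var := by
    rintro lr (h | h) n hn
    · exact R.liftB.lhs_not_var lr h n hn
    · rw [Set.mem_singleton_iff] at h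
      rw [h] at hn
      cases hn

/-! ## The automaton `𝒟(ℛ)` -/

/-- For a symbol `g` and sets of states `Ss` for the arguments, the set
`g(S₁,…,Sₙ)↓` of states reachable from `g` applied to states chosen from the `Ssᵢ`. -/
def oneStep {G : Type} {arG : G → ℕ} {Q : Type} (Γ : Set (TARule G arG Q)) (g : G)
    (Ss : Fin (arG g) → Set Q) : Set Q :=
  { q | ∃ qs : Fin (arG g) → Q, (∀ i, qs i ∈ Ss i) ∧ (⟨g, qs, q⟩ : TARule G arG Q) ∈ Γ }

/-- `t↓` for a ground term `t`: the set of states reachable from `t`. -/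
def dn {G : Type} {arG : G → ℕ} {Q : Type} (Γ : Set (TARule G arG Q))
    (t : Term G arG) : Set Q :=
  { q | Reaches Γ t q }

/-- There is a rewrite rule with left-hand side `g(l₁,…,lₙ)` such that
`⟪lᵢ⟫ ∈ Ssᵢ` for all `i`. -/
def LhsMatch {G : Type} {arG : G → ℕ} {Q : Type} (Rg : TRS G arG)
    (enc2 : Term G arG → Q) (g : G) (Ss : Fin (arG g) → Set Q) : Prop :=
  ∃ (ls : Fin (arG g) → Term G arG) (r : Term G arG),
    (Term.app g ls, r) ∈ Rg.rules ∧ ∀ i, enc2 (stPattern (ls i)) ∈ Ss i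

/-- The transition rules of the automaton `𝒟(ℛ)` over `𝓕`, built from the transition
rules `Γ'` of `𝒞'_{NF}(ℛ)` over `𝓕 ∪ {•}`. -/
def DTrans {F : Type} {ar : F → ℕ} {Q : Type} (Rb : TRS (Option F) (arB ar))
    (Γ' : Set (TARule (Option F) (arB ar) Q))
    (enc enc2 : Term (Option F) (arB ar) → Q) :
    Set (TARule F ar (Set Q × Set Q)) :=
  { ρ | ∃ (f : F) (SP : Fin (ar f) → Set Q × Set Q) (P1 P2 : Set Q),
      P1 ⊆ (⋃ i : Fin (ar f), oneStep Γ' (some f)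
              (fun (j : Fin (ar f)) => if j = i then (SP j).2 else (SP j).1)) ∧
      (∀ (i : Fin (ar f)), ∀ q ∈ (SP i).2,
        (P1 ∩ oneStep Γ' (some f) (fun (j : Fin (ar f)) => if j = i then {q} else (SP j).1)).Nonempty) ∧
      ((LhsMatch Rb enc2 (some f) (fun i => (SP i).1) ∧ P2 = {enc (Term.var 0)}) ∨
       (¬ LhsMatch Rb enc2 (some f) (fun i => (SP i).1) ∧ P2 = (∅ : Set Q))) ∧
      ρ = ⟨f, SP, (oneStep Γ' (some f) (fun i => (SP i).1), P1 ∪ P2)⟩ }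

/-- The automaton `𝒟(ℛ)`: final states are the pairs `[S,P]` with `q_r ∈ S` and
`P ⊆ Q_f`. -/
def DAutomaton {F : Type} {ar : F → ℕ} {Q : Type} (Rb : TRS (Option F) (arB ar))
    (Γ' : Set (TARule (Option F) (arB ar) Q))
    (enc enc2 : Term (Option F) (arB ar) → Q) (qr : Q) (Qf : Set Q) :
    TreeAutomaton F ar (Set Q × Set Q) where
  trans := DTrans Rb Γ' enc enc2
  final := { SP | qr ∈ SP.1 ∧ SP.2 ⊆ Qf }

/-! ## Growing approximations -/

/-- `VarRepl t t'` : `t'` is obtained from `t` by replacing occurrences of variables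
by (possibly other) variables. -/
inductive VarRepl {F : Type} {ar : F → ℕ} : Term F ar → Term F ar → Prop
  | var (n m : ℕ) : VarRepl (Term.var n) (Term.var m)
  | app (f : F) (ts ts' : Fin (ar f) → Term F ar) :
      (∀ i, VarRepl (ts i) (ts' i)) → VarRepl (Term.app f ts) (Term.app f ts')

/-- `Rg` is a growing approximation of `R`: a right-linear growing TRS obtained from
`R` by replacing, in each right-hand side, occurrences of variables by variables not
occurring in the corresponding left-hand side. -/
def IsGrowingApprox {F : Type} {ar : F → ℕ} (R Rg : TRS F ar) : Prop :=
  Rg.RightLinear ∧ Rg.Growing ∧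
  (∀ lr ∈ Rg.rules, ∃ lr' ∈ R.rules, lr.1 = lr'.1 ∧ VarRepl lr'.2 lr.2 ∧
      ∀ n ∈ lr.2.vars, n ∉ lr.1.vars) ∧
  (∀ lr ∈ R.rules, ∃ lr' ∈ Rg.rules, lr.1 = lr'.1 ∧ VarRepl lr.2 lr'.2 ∧
      ∀ n ∈ lr'.2.vars, n ∉ lr'.1.vars)

/-! ## The signature `𝓖 = 𝓕 ∪ {f° : f ∈ 𝓕}` -/

/-- The arity function of the signature `𝓕 ∪ {f° : f ∈ 𝓕}` (`inl f` is `f`,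
`inr f` is `f°`). -/
def arC {F : Type} (ar : F → ℕ) : F ⊕ F → ℕ
  | Sum.inl f => ar f
  | Sum.inr f => ar f

/-- The embedding of `𝒯(𝓕)`-terms into terms over `𝓕 ∪ {f° : f ∈ 𝓕}`. -/
def liftC {F : Type} {ar : F → ℕ} : Term F ar → Term (F ⊕ F) (arC ar) :=
  Term.relabel Sum.inl (fun _ => rfl)

/-- `t°`: mark the root symbol of `t`. -/
def circTm {F : Type} {ar : F → ℕ} : Term F ar → Term (F ⊕ F) (arC ar)
  | Term.var n => Term.var n
  | Term.app f ts => Term.app (Sum.inr f) fun i => liftC (ts i)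

/-- A TRS over `𝓕` viewed as a TRS over `𝓕 ∪ {f° : f ∈ 𝓕}`. -/
def TRS.liftC {F : Type} {ar : F → ℕ} (R : TRS F ar) : TRS (F ⊕ F) (arC ar) :=
  R.relabel Sum.inl (fun _ => rfl)

/-- The TRS `𝒮° = 𝒮 ∪ {l° → r | l → r ∈ 𝒮}` over the signature `𝓕 ∪ {f° : f ∈ 𝓕}`. -/
def TRS.circ {F : Type} {ar : F → ℕ} (S : TRS F ar) : TRS (F ⊕ F) (arC ar) where
  rules := S.liftC.rules ∪ (fun lr => (circTm lr.1, _root_.liftC lr.2)) '' S.rules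
  finite := S.liftC.finite.union (S.finite.image _)
  lhs_not_var := by
    rintro lr (h | ⟨lr0, h0, rfl⟩) n hn
    · exact S.liftC.lhs_not_var lr h n hn
    · dsimp only at hn
      cases h1 : lr0.1 with
      | var m => exact absurd h1 (S.lhs_not_var lr0 h0 m)
      | app f ts =>
          rw [h1] at hn
          simp only [circTm] at hn
          cases hn

/-- The transitions added to `ℬ(𝒮°)` to obtain `𝒜_{REDEX_{𝒮°}}`:
`f(⟨l₁⟩,…,⟨lₙ⟩) → q_f` and `f°(⟨l₁⟩,…,⟨lₙ⟩) → q_f` for each left-hand side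
`f(l₁,…,lₙ)` of a rule of `𝒮`. -/
def CircRedexRules {F : Type} {ar : F → ℕ} {Q : Type} (S : TRS F ar)
    (enc : Term (F ⊕ F) (arC ar) → Q) (qf : Q) : Set (TARule (F ⊕ F) (arC ar) Q) :=
  { ρ | ∃ (f : F) (ls : Fin (ar f) → Term F ar) (r : Term F ar),
      (Term.app f ls, r) ∈ S.rules ∧
      (ρ = ⟨Sum.inl f, fun i => enc (stPattern (liftC (ls i))), qf⟩ ∨
       ρ = ⟨Sum.inr f, fun i => enc (stPattern (liftC (ls i))), qf⟩) }

/-! ## The automaton `𝒟'(ℛ,𝒮)` -/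

/-- The data of the construction of `𝒞'_{RS_{𝒮°}}(ℛ)`: the saturated automaton
`𝒞_{RS_{𝒮°}}(ℛ)`, a fresh copy `⟪t⟫` (encoded by `enc2`, with `⟪x⟫ = ⟨x⟩`) of the
states of `ℬ(ℛ)`, and an automaton `𝒞_{REDEX_𝒮}(𝒮)` (transitions `Etrans`, final
states `Qf'`) recognizing the non-`𝒮`-root-stable ground terms of `𝒯(𝓕)`. -/
structure CrsSetup {F : Type} [Fintype F] {ar : F → ℕ} (Q : Type) [Fintype Q]
    (R S : TRS F ar) extends CSetup Q R.liftC (TRS.RSset S.circ) where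
  enc2 : Term (F ⊕ F) (arC ar) → Q
  henc2 : Set.InjOn enc2 (BStateSet R.liftC)
  hx : enc2 (Term.var 0) = enc (Term.var 0)
  hfresh2 : (enc2 '' (BStateSet R.liftC \ {Term.var 0})) ∩
              (QA ∪ enc '' BStateSet R.liftC) = ∅
  Etrans : Set (TARule (F ⊕ F) (arC ar) Q)
  Qf' : Set Q
  hQf' : Qf' ⊆ statesOf Etrans
  hEfresh : statesOf Etrans ∩
      (QA ∪ enc '' BStateSet R.liftC ∪ enc2 '' (BStateSet R.liftC \ {Term.var 0})) = ∅
  hE : ∀ t : Term (F ⊕ F) (arC ar),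
      (t.Ground ∧ ∃ q ∈ Qf', Reaches Etrans t q) ↔
      (∃ s : Term F ar, t = liftC s ∧ s.Ground ∧ ¬ S.RootStable s)

namespace CrsSetup

variable {F : Type} [Fintype F] {ar : F → ℕ} {Q : Type} [Fintype Q] {R S : TRS F ar}

/-- The transition rules `Γ'` of the automaton `𝒞'_{RS_{𝒮°}}(ℛ)`. -/
def Γ' (C : CrsSetup Q R S) : Set (TARule (F ⊕ F) (arC ar) Q) :=
  C.toCSetup.Γsat ∪ BMatch R.liftC C.enc2 ∪ C.Etrans

end CrsSetup

/-- The transition rules of the automaton `𝒟'(ℛ,𝒮)` over `𝓕`, built from the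
transition rules `Γ'` of `𝒞'_{RS_{𝒮°}}(ℛ)`. -/
def DTransRS {F : Type} {ar : F → ℕ} {Q : Type} (Rg : TRS (F ⊕ F) (arC ar))
    (Γ' : Set (TARule (F ⊕ F) (arC ar) Q)) (enc2 : Term (F ⊕ F) (arC ar) → Q) :
    Set (TARule F ar (Set Q × Set Q)) :=
  { ρ | ∃ (f : F) (SP : Fin (ar f) → Set Q × Set Q) (P1 P2 : Set Q),
      P1 ⊆ (⋃ i : Fin (ar f), oneStep Γ' (Sum.inl f)
              (fun (j : Fin (ar f)) => if j = i then (SP j).2 else (SP j).1)) ∧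
      (∀ (i : Fin (ar f)), ∀ q ∈ (SP i).2,
        (P1 ∩ oneStep Γ' (Sum.inl f) (fun (j : Fin (ar f)) => if j = i then {q} else (SP j).1)).Nonempty) ∧
      ((LhsMatch Rg enc2 (Sum.inl f) (fun i => (SP i).1) ∧ P2.Nonempty ∧
          P2 ⊆ oneStep Γ' (Sum.inr f) (fun i => (SP i).1)) ∨
       (¬ LhsMatch Rg enc2 (Sum.inl f) (fun i => (SP i).1) ∧ P2 = (∅ : Set Q))) ∧
      ρ = ⟨f, SP, (oneStep Γ' (Sum.inl f) (fun i => (SP i).1), P1 ∪ P2)⟩ }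

/-- The automaton `𝒟'(ℛ,𝒮)`: final states are the pairs `[S,P]` with
`S ∩ Q_f' ≠ ∅` and `P ⊆ Q_f`. -/
def DAutomatonRS {F : Type} {ar : F → ℕ} {Q : Type} (Rg : TRS (F ⊕ F) (arC ar))
    (Γ' : Set (TARule (F ⊕ F) (arC ar) Q)) (enc2 : Term (F ⊕ F) (arC ar) → Q)
    (Qf' Qf : Set Q) : TreeAutomaton F ar (Set Q × Set Q) where
  trans := DTransRS Rg Γ' enc2
  final := { SP | (SP.1 ∩ Qf').Nonempty ∧ SP.2 ⊆ Qf }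

section DAutomaton

variable {F : Type} {ar : F → ℕ} {Q : Type}

lemma dn_liftB_app (Γ : Set (TARule (Option F) (arB ar) Q)) (f : F)
    (ts : Fin (ar f) → Term F ar) :
    dn Γ (liftB (Term.app f ts)) = oneStep Γ (some f) (fun i => dn Γ (liftB (ts i))) := by
  ext q
  constructor
  · rintro (⟨hqs, hmem⟩ : Reaches Γ (Term.app (some f) _) q)
    exact ⟨_, hqs, hmem⟩
  · rintro ⟨qs, hqs, hmem⟩
    exact (Reaches.app hqs hmem : Reaches Γ (Term.app (some f) fun i => liftB (ts i)) q)

variable {Rb : TRS (Option F) (arB ar)} {Γ' : Set (TARule (Option F) (arB ar) Q)}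
  {enc enc2 : Term (Option F) (arB ar) → Q}

lemma DTrans.target_fst {ρ : TARule F ar (Set Q × Set Q)} (hρ : ρ ∈ DTrans Rb Γ' enc enc2) :
    ρ.2.2.1 = oneStep Γ' (some ρ.1) (fun i => (ρ.2.1 i).1) := by
  obtain ⟨_, _, _, _, _, _, _, rfl⟩ := hρ
  rfl

theorem DTrans.reaches_fst_eq_dn {t : Term F ar} {SP : Set Q × Set Q}
    (h : Reaches (DTrans Rb Γ' enc enc2) t SP) :
    SP.1 = dn Γ' (liftB t) := by
  induction h with
  | app _ hrule ih =>
    rw [DTrans.target_fst hrule, dn_liftB_app]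
    exact congrArg _ (funext ih)

end DAutomaton

theorem statement6_general {F : Type} [Fintype F] {ar : F → ℕ} {Q : Type} [Fintype Q]
    (R : TRS F ar)
    (C : CpSetup Q R.liftB (TRS.NFset R.bullet))
    (s : Term F ar) (S P : Set Q)
    (h : Reaches (DTrans R.liftB C.Γ' C.enc C.enc2) s (S, P)) :
    S = dn C.Γ' (liftB s) :=
  DTrans.reaches_fst_eq_dn h

/-- Let `ℛ` be a linear growing TRS over `𝓕`, `𝓖 = 𝓕 ∪ {•}`,
`T = NF_{ℛ•}`, and `𝒟(ℛ)` the powerset-pair automaton built from `𝒞'_T(ℛ)`.  For every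
`s ∈ 𝒯(𝓕)`: if `s →_{Γ_𝒟}* [S,P]` then `S = s↓`, the set of all states of `𝒞'_T(ℛ)`
reachable from `s`. -/
theorem statement6 {F : Type} [Fintype F] {ar : F → ℕ} {Q : Type} [Fintype Q]
    (R : TRS F ar) (hlin : R.IsLinear) (hgrow : R.Growing)
    (C : CpSetup Q R.liftB (TRS.NFset R.bullet))
    (s : Term F ar) (hs : s.Ground) (S P : Set Q)
    (h : Reaches (DTrans R.liftB C.Γ' C.enc C.enc2) s (S, P)) :
    S = dn C.Γ' (liftB s) :=
  statement6_general R C s S P h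
end

section
/- Let ℛ be a linear growing TRS over 𝓕 and let 𝒟(ℛ) be the powerset-pair automaton built from 𝒞'_{NF_{ℛ•}}(ℛ). For every s ∈ 𝒯(𝓕): if s →_{Γ_𝒟}* [S,P] then for every redex position p of s there exists a state q ∈ P with q ∈ s[•]_p↓, i.e., s[•]_p →_{Γ'}* q. -/
set_option maxHeartbeats 1000000

/-! The proof is an induction on the run of `𝒟(ℛ)` on `s`. The first component of the state
reached by a term `t` is exactly `t↓`. At a root redex `f(l₁,…,lₙ)σ` every argument `lᵢσ` reaches
`⟪lᵢ⟫`, so `P² = {⟨x⟩}`, and `•` reaches `⟨x⟩` by a propagation rule. At a position `i·p` the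
induction hypothesis yields `q ∈ Pᵢ` reached by `sᵢ[•]_p`, and the covering condition on `P¹`
turns it into a state of `P` reached by `s[•]_{i·p}`. -/

namespace Term

variable {F : Type} {ar : F → ℕ}

theorem ground_app_iff {f : F} {ts : Fin (ar f) → Term F ar} :
    (app f ts).Ground ↔ ∀ i, (ts i).Ground := by
  simp only [Ground, vars, ← Finset.subset_empty, Finset.biUnion_subset, Finset.mem_univ,
    forall_const]

theorem subtermAt_cons {f : F} {ts : Fin (ar f) → Term F ar} {i : ℕ} (hi : i < ar f)
    (p : List ℕ) : (app f ts).subtermAt (i :: p) = (ts ⟨i, hi⟩).subtermAt p := by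
  simp only [subtermAt, dif_pos hi]

theorem replaceAt_cons {f : F} {ts : Fin (ar f) → Term F ar} {i : ℕ} (hi : i < ar f)
    (p : List ℕ) (u : Term F ar) :
    (app f ts).replaceAt (i :: p) u =
      ((ts ⟨i, hi⟩).replaceAt p u).map fun s => app f (Function.update ts ⟨i, hi⟩ s) := by
  simp only [replaceAt, dif_pos hi]

theorem subtermAt_append {t u : Term F ar} {p : List ℕ} (h : t.subtermAt p = some u)
    (q : List ℕ) : t.subtermAt (p ++ q) = u.subtermAt q := by
  induction p generalizing t with
  | nil =>
    simp only [subtermAt, Option.some.injEq] at h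
    subst h
    rfl
  | cons i p ih =>
    cases t with
    | var _ => cases h
    | app f ts =>
      by_cases hi : i < ar f
      · rw [subtermAt_cons hi] at h
        rw [List.cons_append, subtermAt_cons hi]
        exact ih h
      · simp only [subtermAt, dif_neg hi, reduceCtorEq] at h

theorem IsSubtermOf.arg {t : Term F ar} {f : F} {us : Fin (ar f) → Term F ar}
    (h : (app f us).IsSubtermOf t) (i : Fin (ar f)) : (us i).IsSubtermOf t := by
  obtain ⟨p, hp⟩ := h
  exact ⟨p ++ [i.val], by
    rw [subtermAt_append hp, subtermAt_cons i.isLt]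
    simp only [subtermAt, Fin.eta]⟩

end Term

theorem TRS.RedexPos.exists_of_cons {F : Type} {ar : F → ℕ} {R : TRS F ar} {f : F}
    {ts : Fin (ar f) → Term F ar} {i : ℕ} {p : List ℕ}
    (h : R.RedexPos (Term.app f ts) (i :: p)) :
    ∃ hi : i < ar f, R.RedexPos (ts ⟨i, hi⟩) p := by
  obtain ⟨u, hu, hred⟩ := h
  by_cases hi : i < ar f
  · exact ⟨hi, u, by rwa [Term.subtermAt_cons hi] at hu, hred⟩
  · simp only [Term.subtermAt, dif_neg hi, reduceCtorEq] at hu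

section Automata

variable {G : Type} {arG : G → ℕ} {Q : Type} {Γ : Set (TARule G arG Q)}

theorem Reaches.ground {t : Term G arG} {q : Q} (h : Reaches Γ t q) : t.Ground := by
  induction h with
  | app _ _ ih => exact Term.ground_app_iff.mpr ih

theorem oneStep_dn (g : G) (ts : Fin (arG g) → Term G arG) :
    oneStep Γ g (fun i => dn Γ (ts i)) = dn Γ (Term.app g ts) := by
  ext q
  constructor
  · rintro ⟨qs, hqs, hρ⟩
    exact Reaches.app hqs hρ
  · rintro (⟨hqs, hρ⟩ : Reaches Γ (Term.app g ts) q)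
    exact ⟨_, hqs, hρ⟩

theorem reaches_app_update_of_mem_oneStep {g : G} {ts : Fin (arG g) → Term G arG}
    {Ss : Fin (arG g) → Set Q} (hSs : ∀ j, ∀ q ∈ Ss j, Reaches Γ (ts j) q)
    {i : Fin (arG g)} {u : Term G arG} {q q' : Q} (hu : Reaches Γ u q)
    (hq' : q' ∈ oneStep Γ g (fun j => if j = i then {q} else Ss j)) :
    Reaches Γ (Term.app g (Function.update ts i u)) q' := by
  obtain ⟨qs, hqs, hρ⟩ := hq'
  refine Reaches.app (fun j => ?_) hρ
  by_cases hj : j = i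
  · subst hj
    have hq : qs j = q := by simpa using hqs j
    rw [Function.update_self, hq]
    exact hu
  · rw [Function.update_of_ne hj]
    exact hSs j _ (by simpa [hj] using hqs j)

theorem reaches_enc_var_zero {enc : Term G arG → Q} (hprop : BProp enc ⊆ Γ) :
    ∀ {t : Term G arG}, t.Ground → Reaches Γ t (enc (Term.var 0))
  | Term.var _, ht => by simp [Term.Ground, Term.vars] at ht
  | Term.app g us, ht =>
    Reaches.app (fun i => reaches_enc_var_zero hprop (Term.ground_app_iff.mp ht i))
      (hprop ⟨g, rfl⟩)

theorem arg_mem_SR {Rg : TRS G arG} {g : G} {us : Fin (arG g) → Term G arG}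
    (h : Term.app g us ∈ SR Rg) (i : Fin (arG g)) : us i ∈ SR Rg := by
  obtain ⟨lr, hlr, f, ts, hl, j, hsub⟩ := h
  exact ⟨lr, hlr, f, ts, hl, j, hsub.arg i⟩

theorem reaches_enc2_stPattern_subst {Rg : TRS G arG} {enc enc2 : Term G arG → Q}
    (hprop : BProp enc ⊆ Γ) (hmatch : BMatch Rg enc2 ⊆ Γ)
    (hx : enc2 (Term.var 0) = enc (Term.var 0)) (σ : ℕ → Term G arG) :
    ∀ {t : Term G arG}, t ∈ SR Rg → (t.subst σ).Ground →
      Reaches Γ (t.subst σ) (enc2 (stPattern t))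
  | Term.var _, _, hg => hx ▸ reaches_enc_var_zero hprop hg
  | Term.app g us, hmem, hg =>
    Reaches.app
      (fun i => reaches_enc2_stPattern_subst hprop hmatch hx σ (arg_mem_SR hmem i)
        (Term.ground_app_iff.mp hg i))
      (hmatch ⟨g, us, hmem, rfl⟩)

end Automata

section Bullet

variable {F : Type} {ar : F → ℕ}

theorem vars_liftB (t : Term F ar) : (liftB t).vars = t.vars := by
  induction t with
  | var n => rfl
  | app f ts ih => exact Finset.biUnion_congr rfl fun i _ => ih i

theorem Term.Ground.liftB {t : Term F ar} (h : t.Ground) : (_root_.liftB t).Ground :=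
  (vars_liftB t).trans h

theorem liftB_subst (σ : ℕ → Term F ar) (t : Term F ar) :
    liftB (t.subst σ) = (liftB t).subst (fun n => liftB (σ n)) := by
  induction t with
  | var n => rfl
  | app f ts ih =>
    show Term.app (some f) (fun i => liftB ((ts i).subst σ)) =
      Term.app (some f) (fun i => (liftB (ts i)).subst (fun n => liftB (σ n)))
    exact congrArg _ (funext ih)

end Bullet

namespace DTrans

variable {F : Type} {ar : F → ℕ} {Q : Type} {Rb : TRS (Option F) (arB ar)}
  {Γ' : Set (TARule (Option F) (arB ar) Q)} {enc enc2 : Term (Option F) (arB ar) → Q}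
  {f : F} {SP : Fin (ar f) → Set Q × Set Q} {SPt : Set Q × Set Q}

theorem fst_eq (h : ⟨f, SP, SPt⟩ ∈ DTrans Rb Γ' enc enc2) :
    SPt.1 = oneStep Γ' (some f) (fun i => (SP i).1) := by
  obtain ⟨_, _, _, _, _, _, _, ⟨⟩⟩ := h
  rfl

theorem exists_mem_snd (h : ⟨f, SP, SPt⟩ ∈ DTrans Rb Γ' enc enc2) (i : Fin (ar f))
    {q : Q} (hq : q ∈ (SP i).2) :
    ∃ q' ∈ SPt.2,
      q' ∈ oneStep Γ' (some f) (fun (j : Fin (ar f)) => if j = i then {q} else (SP j).1) := by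
  obtain ⟨_, _, P1, _, _, hcover, _, ⟨⟩⟩ := h
  obtain ⟨q', hq'P1, hq'⟩ := hcover i q hq
  exact ⟨q', Or.inl hq'P1, hq'⟩

theorem enc_var_zero_mem_snd (h : ⟨f, SP, SPt⟩ ∈ DTrans Rb Γ' enc enc2)
    (hmatch : LhsMatch Rb enc2 (some f) (fun i => (SP i).1)) :
    enc (Term.var 0) ∈ SPt.2 := by
  obtain ⟨_, _, _, _, _, _, ⟨_, rfl⟩ | ⟨hnot, _⟩, ⟨⟩⟩ := h
  · exact Or.inr rfl
  · exact absurd hmatch hnot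

end DTrans

namespace CpSetup

variable {G : Type} [Fintype G] {arG : G → ℕ} {Q : Type} [Fintype Q]
  {Rg : TRS G arG} {T : Set (Term G arG)} (C : CpSetup Q Rg T)

theorem bProp_subset_Γ' : BProp C.enc ⊆ C.Γ' := fun _ hρ =>
  Or.inl (Or.inl (Or.inl (Set.mem_iUnion.mpr ⟨0, Or.inr (Or.inr hρ)⟩)))

theorem bMatch_subset_Γ' : BMatch Rg C.enc2 ⊆ C.Γ' := fun _ hρ =>
  Or.inl (Or.inl (Or.inr hρ))

end CpSetup

section RedexPositions

variable {F : Type} {ar : F → ℕ} {Q : Type} {R : TRS F ar}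
  {Γ' : Set (TARule (Option F) (arB ar) Q)} {enc enc2 : Term (Option F) (arB ar) → Q}

theorem fst_eq_dn_of_reaches_DTrans {Rb : TRS (Option F) (arB ar)} {t : Term F ar}
    {SP : Set Q × Set Q} (h : Reaches (DTrans Rb Γ' enc enc2) t SP) :
    SP.1 = dn Γ' (liftB t) := by
  induction h with
  | @app f ts _ _ _ hrule ih =>
    rw [DTrans.fst_eq hrule]
    exact (congrArg (oneStep Γ' (some f)) (funext ih)).trans (oneStep_dn (some f) _)

variable (hprop : BProp enc ⊆ Γ') (hmatch : BMatch R.liftB enc2 ⊆ Γ')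
  (hx : enc2 (Term.var 0) = enc (Term.var 0))
include hprop hmatch hx

theorem lhsMatch_of_isRedex {f : F} {ts : Fin (ar f) → Term F ar}
    {SP : Fin (ar f) → Set Q × Set Q}
    (hch : ∀ i, Reaches (DTrans R.liftB Γ' enc enc2) (ts i) (SP i))
    (hred : R.IsRedex (Term.app f ts)) :
    LhsMatch R.liftB enc2 (some f) (fun i => (SP i).1) := by
  obtain ⟨⟨l, r⟩, hlr, σ, hl⟩ := hred
  cases l with
  | var n => exact absurd rfl (R.lhs_not_var _ hlr n)
  | app g ls =>
    cases hl
    have hrule : (Term.app (some f) (fun i => liftB (ls i)), liftB r) ∈ R.liftB.rules :=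
      ⟨_, hlr, rfl⟩
    refine ⟨_, _, hrule, fun (i : Fin (ar f)) => ?_⟩
    have hground := (hch i).ground.liftB
    rw [liftB_subst] at hground
    have hreach := reaches_enc2_stPattern_subst hprop hmatch hx _
      ⟨_, hrule, _, _, rfl, i, [], by simp only [Term.subtermAt]⟩ hground
    rw [← liftB_subst] at hreach
    exact (Set.ext_iff.mp (fst_eq_dn_of_reaches_DTrans (hch i)) _).mpr hreach

theorem exists_reaches_replaceAt_bullet {s : Term F ar} {SP : Set Q × Set Q}
    (h : Reaches (DTrans R.liftB Γ' enc enc2) s SP) {p : List ℕ} (hp : R.RedexPos s p) :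
    ∃ u, (liftB s).replaceAt p bulletTm = some u ∧ ∃ q ∈ SP.2, Reaches Γ' u q := by
  induction h generalizing p with
  | @app f ts SPs _ hch hrule ih =>
  cases p with
  | nil =>
    obtain ⟨u, hu, hred⟩ := hp
    cases hu
    exact ⟨bulletTm, rfl, enc (Term.var 0),
      DTrans.enc_var_zero_mem_snd hrule (lhsMatch_of_isRedex hprop hmatch hx hch hred),
      Reaches.app (fun i => i.elim0) (hprop ⟨none, rfl⟩)⟩
  | cons i p =>
    obtain ⟨hi, hp⟩ := hp.exists_of_cons
    obtain ⟨u, hu, q, hq, hreach⟩ := ih ⟨i, hi⟩ hp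
    obtain ⟨q', hq'P, hq'⟩ := DTrans.exists_mem_snd hrule ⟨i, hi⟩ hq
    have hSPs : ∀ j, ∀ q ∈ (SPs j).1, Reaches Γ' (liftB (ts j)) q := fun j q hq => by
      rwa [fst_eq_dn_of_reaches_DTrans (hch j)] at hq
    refine ⟨_, ?_, q', hq'P, reaches_app_update_of_mem_oneStep hSPs hreach hq'⟩
    rw [show liftB (Term.app f ts) = Term.app (some f) fun k => liftB (ts k) from rfl,
      Term.replaceAt_cons (show i < arB ar (some f) from hi)]
    exact congrArg (Option.map _) hu

end RedexPositions

theorem statement7_general {F : Type} [Fintype F] {ar : F → ℕ} {Q : Type} [Fintype Q]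
    (R : TRS F ar)
    (C : CpSetup Q R.liftB (TRS.NFset R.bullet))
    (s : Term F ar) (S P : Set Q)
    (h : Reaches (DTrans R.liftB C.Γ' C.enc C.enc2) s (S, P))
    (p : List ℕ) (hp : R.RedexPos s p) :
    ∃ u, (liftB s).replaceAt p bulletTm = some u ∧ ∃ q ∈ P, Reaches C.Γ' u q :=
  exists_reaches_replaceAt_bullet C.bProp_subset_Γ' C.bMatch_subset_Γ' C.hx h hp

/-- Let `ℛ` be a linear growing TRS over `𝓕` and `𝒟(ℛ)` the
powerset-pair automaton built from `𝒞'_{NF_{ℛ•}}(ℛ)`.  For every `s ∈ 𝒯(𝓕)`: if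
`s →_{Γ_𝒟}* [S,P]` then for every redex position `p` of `s` there is a state `q ∈ P`
with `q ∈ s[•]_p↓`, i.e., `s[•]_p →_{Γ'}* q`. -/
theorem statement7 {F : Type} [Fintype F] {ar : F → ℕ} {Q : Type} [Fintype Q]
    (R : TRS F ar) (hlin : R.IsLinear) (hgrow : R.Growing)
    (C : CpSetup Q R.liftB (TRS.NFset R.bullet))
    (s : Term F ar) (hs : s.Ground) (S P : Set Q)
    (h : Reaches (DTrans R.liftB C.Γ' C.enc C.enc2) s (S, P))
    (p : List ℕ) (hp : R.RedexPos s p) :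
    ∃ u, (liftB s).replaceAt p bulletTm = some u ∧ ∃ q ∈ P, Reaches C.Γ' u q :=
  statement7_general R C s S P h p hp
end
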